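/- Let H be the join of two finite simple graphs H1 and H2 (the disjoint union of H1 and H2 together with all edges between V(H1) and V(H2)). Then H is {P4, K1 ∪ K3}-free if and only if both H1 and H2 are {P4, K1 ∪ K3}-free. -/

import Mathlib

/-!
Two vertices of a join that are not adjacent lie on the same side. Both `P4` and `K1 ∪ K3` have
connected complements (`P4` is self-complementary, the complement of `K1 ∪ K3` is the claw), so
the non-edges of an induced copy of either graph in the join chain all of its vertices to one side,
and the copy is already an induced subgraph of `H1` or of `H2`.
-/

open SimpleGraph

/-- `G` is `H`-free: no induced subgraph of `G` is isomorphic to `H`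
(an induced copy is a graph embedding). -/
def InducedFree {α β : Type*} (H : SimpleGraph β) (G : SimpleGraph α) : Prop :=
  ¬ Nonempty (H ↪g G)

/-- The join of two graphs: their disjoint union together with all edges
between the two vertex sets. -/
def graphJoin {α β : Type*} (H1 : SimpleGraph α) (H2 : SimpleGraph β) :
    SimpleGraph (α ⊕ β) where
  Adj x y :=
    Sum.elim (fun a => Sum.elim (fun b => H1.Adj a b) (fun _ => True) y)
             (fun a => Sum.elim (fun _ => True) (fun b => H2.Adj a b) y) x
  symm := ⟨by
    rintro (a|a) (b|b) h
    · exact h.symm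
    · trivial
    · trivial
    · exact h.symm⟩
  loopless := ⟨by
    rintro (a|a) h
    · exact H1.irrefl h
    · exact H2.irrefl h⟩

/-- The path on four vertices. -/
def P4 : SimpleGraph (Fin 4) := fromEdgeSet {s(0,1), s(1,2), s(2,3)}

/-- `K1 ∪ K3`: a triangle `1,2,3` together with the isolated vertex `0`
(the complement of the claw). -/
def K1uK3 : SimpleGraph (Fin 4) := fromEdgeSet {s(1,2), s(1,3), s(2,3)}

namespace SimpleGraph

lemma Reachable.eq_of_forall_adj {V X : Type*} {G : SimpleGraph V} {f : V → X}
    (hf : ∀ u v, G.Adj u v → f u = f v) {u v : V} (huv : G.Reachable u v) : f u = f v := by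
  obtain ⟨p⟩ := huv
  induction p with
  | nil => rfl
  | cons hadj _ ih => exact (hf _ _ hadj).trans ih

lemma Preconnected.of_forall_reachable {V : Type*} {G : SimpleGraph V} (v₀ : V)
    (h : ∀ v, G.Reachable v₀ v) : G.Preconnected :=
  fun u v => (h u).symm.trans (h v)

end SimpleGraph

lemma InducedFree.anti {γ α α' : Type*} {F : SimpleGraph γ} {G : SimpleGraph α}
    {G' : SimpleGraph α'} (hG' : InducedFree F G') (e : G ↪g G') : InducedFree F G :=
  fun ⟨f⟩ => hG' ⟨e.comp f⟩

namespace graphJoin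

variable {α β γ : Type*} {H1 : SimpleGraph α} {H2 : SimpleGraph β}

@[simp] lemma adj_inl_inr {a : α} {b : β} : (graphJoin H1 H2).Adj (.inl a) (.inr b) :=
  trivial

@[simp] lemma adj_inr_inl {a : α} {b : β} : (graphJoin H1 H2).Adj (.inr b) (.inl a) :=
  trivial

variable (H1 H2) in
def inlEmbedding : H1 ↪g graphJoin H1 H2 :=
  ⟨⟨Sum.inl, Sum.inl_injective⟩, Iff.rfl⟩

variable (H1 H2) in
def inrEmbedding : H2 ↪g graphJoin H1 H2 :=
  ⟨⟨Sum.inr, Sum.inr_injective⟩, Iff.rfl⟩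

lemma isLeft_eq_of_not_adj {x y : α ⊕ β} (h : ¬ (graphJoin H1 H2).Adj x y) :
    x.isLeft = y.isLeft := by
  cases x <;> cases y <;> simp_all

lemma isLeft_eq_of_compl_preconnected {G : SimpleGraph γ} (hG : Gᶜ.Preconnected)
    (f : G ↪g graphJoin H1 H2) (i j : γ) : (f i).isLeft = (f j).isLeft :=
  (hG i j).eq_of_forall_adj fun _ _ (hadj : Gᶜ.Adj _ _) =>
    isLeft_eq_of_not_adj fun h => hadj.2 (f.map_rel_iff.mp h)

lemma nonempty_embedding_left {G : SimpleGraph γ} (f : G ↪g graphJoin H1 H2)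
    (hf : ∀ i, (f i).isLeft) : Nonempty (G ↪g H1) := by
  choose g hg using fun i => Sum.isLeft_iff.mp (hf i)
  refine ⟨⟨⟨g, fun i j hij => f.injective (by rw [hg i, hg j, hij])⟩, fun {i j} => ?_⟩⟩
  rw [← f.map_rel_iff, hg i, hg j]
  rfl

lemma nonempty_embedding_right {G : SimpleGraph γ} (f : G ↪g graphJoin H1 H2)
    (hf : ∀ i, (f i).isRight) : Nonempty (G ↪g H2) := by
  choose g hg using fun i => Sum.isRight_iff.mp (hf i)
  refine ⟨⟨⟨g, fun i j hij => f.injective (by rw [hg i, hg j, hij])⟩, fun {i j} => ?_⟩⟩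
  rw [← f.map_rel_iff, hg i, hg j]
  rfl

theorem inducedFree_iff_of_compl_preconnected {G : SimpleGraph γ} (hG : Gᶜ.Preconnected) :
    InducedFree G (graphJoin H1 H2) ↔ InducedFree G H1 ∧ InducedFree G H2 := by
  refine ⟨fun h => ⟨h.anti (inlEmbedding H1 H2), h.anti (inrEmbedding H1 H2)⟩, ?_⟩
  rintro ⟨h1, h2⟩ ⟨f⟩
  by_cases hleft : ∃ i, (f i).isLeft
  · obtain ⟨i₀, hi₀⟩ := hleft
    exact h1 (nonempty_embedding_left f fun i =>
      (isLeft_eq_of_compl_preconnected hG f i i₀).trans hi₀)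
  · exact h2 (nonempty_embedding_right f fun i => Sum.not_isLeft.mp (not_exists.mp hleft i))

end graphJoin

lemma P4_compl_preconnected : P4ᶜ.Preconnected := by
  have h02 : P4ᶜ.Adj 0 2 := by simp [P4]
  have h03 : P4ᶜ.Adj 0 3 := by simp [P4]
  have h31 : P4ᶜ.Adj 3 1 := by simp [P4]
  refine Preconnected.of_forall_reachable 0 fun v => ?_
  fin_cases v
  exacts [.rfl, h03.reachable.trans h31.reachable, h02.reachable, h03.reachable]

lemma K1uK3_compl_preconnected : K1uK3ᶜ.Preconnected := by
  refine Preconnected.of_forall_reachable 0 fun v => ?_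
  fin_cases v
  · rfl
  all_goals exact Adj.reachable (by simp [K1uK3])

theorem join_P4_K1uK3_free_general {α β : Type*}
    (H1 : SimpleGraph α) (H2 : SimpleGraph β) :
    (InducedFree P4 (graphJoin H1 H2) ∧ InducedFree K1uK3 (graphJoin H1 H2)) ↔
      ((InducedFree P4 H1 ∧ InducedFree K1uK3 H1) ∧
       (InducedFree P4 H2 ∧ InducedFree K1uK3 H2)) := by
  rw [graphJoin.inducedFree_iff_of_compl_preconnected P4_compl_preconnected,
    graphJoin.inducedFree_iff_of_compl_preconnected K1uK3_compl_preconnected]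
  tauto

theorem join_P4_K1uK3_free {α β : Type*} [Fintype α] [Fintype β]
    (H1 : SimpleGraph α) (H2 : SimpleGraph β) :
    (InducedFree P4 (graphJoin H1 H2) ∧ InducedFree K1uK3 (graphJoin H1 H2)) ↔
      ((InducedFree P4 H1 ∧ InducedFree K1uK3 H1) ∧
       (InducedFree P4 H2 ∧ InducedFree K1uK3 H2)) :=
  join_P4_K1uK3_free_general H1 H2
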